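/- arXiv:2106.08496 — 8 statements merged into one kernel-verified Lean document; each statement's English description precedes it below -/
import Mathlib

section
/- Suppose g : [0,T] → ℝ is continuous, g(0) ≥ 0, and for all s ∈ [0,T], v(s,s)·g(s) = c'(s) - ∫₀ˢ v'(s,y) g(y) dy, where v(s,s) > 0, c'(s) > 0 for s > 0, and |v'(s,y)| < c'(s) for all s > 0 and y ∈ [0,s]. If s⋆ ∈ (0,T] satisfies ∫₀^{s⋆} |g(y)| dy ≤ 1 and g(y) ≥ 0 for all y ∈ [0,s⋆], then g(s⋆) > 0. -/
/-!
At `s⋆` the equation reads `v(s⋆,s⋆) g(s⋆) = c'(s⋆) - ∫₀^{s⋆} v'(s⋆,y) g(y) dy`. By compactness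
`|v'(s⋆,·)|` attains a maximum `M < c'(s⋆)` on `[0,s⋆]`, and since `g ≥ 0` has mass at most one there,
the integral is at most `M`. Hence the right-hand side is positive, and so is `g(s⋆)` because
`v(s⋆,s⋆) > 0`.
-/

open Set MeasureTheory

theorem intervalIntegral_mul_lt_of_abs_lt {a b C : ℝ} {f g : ℝ → ℝ} (hab : a ≤ b)
    (hf : ContinuousOn f (Icc a b)) (hg : IntervalIntegrable g volume a b)
    (hg_nonneg : ∀ y ∈ Icc a b, 0 ≤ g y) (hg_mass : ∫ y in a..b, g y ≤ 1)
    (hfC : ∀ y ∈ Icc a b, |f y| < C) :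
    ∫ y in a..b, f y * g y < C := by
  obtain ⟨y₀, hy₀, hmax⟩ := isCompact_Icc.exists_isMaxOn (nonempty_Icc.2 hab) hf.abs
  have hfg : IntervalIntegrable (fun y => f y * g y) volume a b :=
    hg.continuousOn_mul (by rwa [uIcc_of_le hab])
  have hf_le : ∀ y ∈ Icc a b, f y * g y ≤ |f y₀| * g y := fun y hy =>
    mul_le_mul_of_nonneg_right ((le_abs_self _).trans (hmax hy)) (hg_nonneg y hy)
  calc ∫ y in a..b, f y * g y
      ≤ ∫ y in a..b, |f y₀| * g y := intervalIntegral.integral_mono_on hab hfg (hg.const_mul _) hf_le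
    _ = |f y₀| * ∫ y in a..b, g y := intervalIntegral.integral_const_mul _ _
    _ ≤ |f y₀| := mul_le_of_le_one_right (abs_nonneg _) hg_mass
    _ < C := hfC y₀ hy₀

theorem density_positive_general (T : ℝ)
    (v v' : ℝ → ℝ → ℝ) (c' g : ℝ → ℝ)
    (hv'c : ContinuousOn (fun p : ℝ × ℝ => v' p.1 p.2) (Icc 0 T ×ˢ Icc 0 T))
    (hgc : ContinuousOn g (Icc 0 T))
    (heq : ∀ s ∈ Icc (0:ℝ) T, v s s * g s = c' s - ∫ y in (0:ℝ)..s, v' s y * g y)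
    (hv : ∀ s ∈ Icc (0:ℝ) T, 0 < v s s)
    (hdom : ∀ s ∈ Ioc (0:ℝ) T, ∀ y ∈ Icc (0:ℝ) s, |v' s y| < c' s)
    (sstar : ℝ) (hs : sstar ∈ Ioc (0:ℝ) T)
    (hmass : (∫ y in (0:ℝ)..sstar, |g y|) ≤ 1)
    (hnn : ∀ y ∈ Icc (0:ℝ) sstar, 0 ≤ g y) :
    0 < g sstar := by
  have hsIcc : sstar ∈ Icc (0:ℝ) T := Ioc_subset_Icc_self hs
  have hsub : Icc (0:ℝ) sstar ⊆ Icc 0 T := Icc_subset_Icc_right hs.2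
  have hv'_cont : ContinuousOn (v' sstar) (Icc 0 sstar) :=
    (hv'c.uncurry_left sstar hsIcc).mono hsub
  have hg_int : IntervalIntegrable g volume 0 sstar :=
    (hgc.mono hsub).intervalIntegrable_of_Icc hs.1.le
  have hg_mass : ∫ y in (0:ℝ)..sstar, g y ≤ 1 := by
    rwa [intervalIntegral.integral_congr fun y hy =>
      (abs_of_nonneg (hnn y (by rwa [uIcc_of_le hs.1.le] at hy))).symm]
  have hint : ∫ y in (0:ℝ)..sstar, v' sstar y * g y < c' sstar :=
    intervalIntegral_mul_lt_of_abs_lt hs.1.le hv'_cont hg_int hnn hg_mass (hdom sstar hs)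
  have hvg : 0 < v sstar sstar * g sstar := by
    rw [heq sstar hsIcc]
    exact sub_pos.2 hint
  exact pos_of_mul_pos_right hvg (hv sstar hsIcc).le

/-- Positivity of the solution of the equilibrium Volterra equation (key step of
Lemma 2): if `g` is nonnegative with total mass at most one up to `sstar`, then
`g sstar > 0`. -/
theorem density_positive (T : ℝ) (hT : 0 < T)
    (v v' : ℝ → ℝ → ℝ) (c' g : ℝ → ℝ)
    (hvc : ContinuousOn (fun p : ℝ × ℝ => v p.1 p.2) (Icc 0 T ×ˢ Icc 0 T))
    (hv'c : ContinuousOn (fun p : ℝ × ℝ => v' p.1 p.2) (Icc 0 T ×ˢ Icc 0 T))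
    (hc'c : ContinuousOn c' (Icc 0 T))
    (hgc : ContinuousOn g (Icc 0 T))
    (hg0 : 0 ≤ g 0)
    (heq : ∀ s ∈ Icc (0:ℝ) T, v s s * g s = c' s - ∫ y in (0:ℝ)..s, v' s y * g y)
    (hv : ∀ s ∈ Icc (0:ℝ) T, 0 < v s s)
    (hc' : ∀ s ∈ Ioc (0:ℝ) T, 0 < c' s)
    (hdom : ∀ s ∈ Ioc (0:ℝ) T, ∀ y ∈ Icc (0:ℝ) s, |v' s y| < c' s)
    (sstar : ℝ) (hs : sstar ∈ Ioc (0:ℝ) T)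
    (hmass : (∫ y in (0:ℝ)..sstar, |g y|) ≤ 1)
    (hnn : ∀ y ∈ Icc (0:ℝ) sstar, 0 ≤ g y) :
    0 < g sstar :=
  density_positive_general T v v' c' g hv'c hgc heq hv hdom sstar hs hmass hnn
end

section
/- Let δ > 0 and consider payoffs u₁(s₁,s₂) equal to (1 - s₂) - δs₁ if s₁ > s₂ and -s₁ - δs₁ if s₁ < s₂, where Player 2 plays the mixed strategy with CDF G₂(s) = (1+δ)(1 - e^{-s}) on [0, s̄], with s̄ satisfying G₂(s̄) = 1, i.e. s̄ = log(1+δ) - log δ. Then Player 1's expected payoff ∫₀ˢ (1 - y) dG₂(y) + (1 - G₂(s))(-s) - δs is constant (equal to 0) for all s ∈ [0, s̄]. -/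
open Set

lemma woa_aux (δ s : ℝ) :
    (∫ y in (0:ℝ)..s, (1 - y) * ((1 + δ) * Real.exp (-y)))
      = (1 + δ) * (s * Real.exp (-s)) := by
  have h : ∀ y ∈ uIcc (0:ℝ) s,
      HasDerivAt (fun y => (1 + δ) * (y * Real.exp (-y)))
        ((1 - y) * ((1 + δ) * Real.exp (-y))) y := by
    intro y _
    have h1 : HasDerivAt (fun y : ℝ => Real.exp (-y)) (-Real.exp (-y)) y := by
      exact ((Real.hasDerivAt_exp (-y)).comp y (hasDerivAt_neg y)).congr_deriv (by simp)
    have h2 := ((hasDerivAt_id y).mul h1).const_mul (1 + δ)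
    exact h2.congr_deriv (by simp only [id]; ring)
  have hint : IntervalIntegrable (fun y => (1 - y) * ((1 + δ) * Real.exp (-y)))
      MeasureTheory.volume 0 s := by
    apply Continuous.intervalIntegrable
    continuity
  have := intervalIntegral.integral_eq_sub_of_hasDerivAt h hint
  simpa using this

/-- Indifference condition for Player 1 in the war of attrition with costly
preparation `ε(s) = δ s`, when Player 2 plays the CDF
`G₂ s = (1+δ)(1 - e^{-s})` on `[0, s̄]` with `s̄ = log((1+δ)/δ)`:
Player 1's expected payoff is identically zero on `[0, s̄]`. -/
theorem woa_costly_prep_indifference (δ : ℝ) (hδ : 0 < δ) :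
    ∀ s ∈ Icc (0:ℝ) (Real.log ((1 + δ) / δ)),
      (∫ y in (0:ℝ)..s, (1 - y) * ((1 + δ) * Real.exp (-y)))
        + (1 - (1 + δ) * (1 - Real.exp (-s))) * (-s) - δ * s = 0 := by
  intro s _
  rw [woa_aux]
  ring
end

section
/- In the offensive/defensive balance model with parameters V > 0, c_a ≥ c_d > 0, δ_a > 0, the quantities s̄_d := V/(c_a + δ_a) and s̄_a := (V/δ_a)(1 - exp(-δ_a/c_d)) satisfy s̄_d < s̄_a. -/
/-!
Since `1 + x < eˣ` for `x > 0`, we get `x / (1 + x) < 1 - e⁻ˣ`. Taking `x = δa / cd` and using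
`cd ≤ ca` gives `δa / (ca + δa) ≤ δa / (cd + δa) < 1 - e^{-δa/cd}`; multiplying by `V / δa`
yields the claim.
-/

open Real

theorem div_one_add_lt_one_sub_exp_neg {x : ℝ} (hx : 0 < x) : x / (1 + x) < 1 - exp (-x) := by
  have hexp : exp (-x) < (1 + x)⁻¹ := by
    rw [exp_neg]
    exact inv_strictAnti₀ (by positivity) (by linarith [add_one_lt_exp hx.ne'])
  have hsplit : x / (1 + x) = 1 - (1 + x)⁻¹ := by field_simp; ring
  linarith

/-- In the offensive/defensive balance model with `V > 0`, `c_a ≥ c_d > 0` and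
`δ_a > 0`, the defender's cutoff exceeds the attacker's:
`s̄_d = V/(c_a + δ_a) < (V/δ_a)(1 - e^{-δ_a/c_d}) = s̄_a`. -/
theorem defender_positive_payoff (V ca cd δa : ℝ)
    (hV : 0 < V) (hcd : 0 < cd) (hca : cd ≤ ca) (hδ : 0 < δa) :
    V / (ca + δa) < (V / δa) * (1 - Real.exp (-δa / cd)) := by
  have hshare : δa / (ca + δa) ≤ δa / (cd + δa) := by gcongr
  have hrescale : δa / (cd + δa) = δa / cd / (1 + δa / cd) := by field_simp
  have hkey : δa / (ca + δa) < 1 - exp (-δa / cd) := by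
    rw [neg_div]
    exact hshare.trans_lt (hrescale ▸ div_one_add_lt_one_sub_exp_neg (by positivity))
  calc V / (ca + δa) = V / δa * (δa / (ca + δa)) := by field_simp
    _ < V / δa * (1 - exp (-δa / cd)) := by gcongr
end

section
/- For all c > 0 and δ > 0, (c/δ²)·(δ + c·log(c/(c+δ))) < 1/2. Consequently in the offensive/defensive model with c_a = c_d = c, the attacker's equilibrium winning probability (c/δ²)(δ + c·log(c/(c+δ))) is strictly less than 1/2. -/
open Real

/-! Via `log (1 + x) > 2x/(x + 2)` at `x = δ/c`, the attacker's probability is below `c/(2c + δ)`,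
which is less than `1/2`. -/

theorem add_mul_log_div_add_lt {c δ : ℝ} (hc : 0 < c) (hδ : 0 < δ) :
    δ + c * log (c / (c + δ)) < δ ^ 2 / (2 * c + δ) := by
  have hlog : log (c / (c + δ)) = -log (1 + δ / c) := by
    rw [← log_inv, one_add_div hc.ne', inv_div]
  have hlower : 2 * (δ / c) / (δ / c + 2) < log (1 + δ / c) :=
    lt_log_one_add_of_pos (div_pos hδ hc)
  have hscaled : c * (2 * (δ / c) / (δ / c + 2)) = δ - δ ^ 2 / (2 * c + δ) := by
    field_simp
    ring
  rw [hlog]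
  linarith [mul_lt_mul_of_pos_left hlower hc]

/-- The attacker's equilibrium winning probability in the offensive/defensive
balance model with equal costs `c_a = c_d = c` is strictly less than `1/2`:
for all `c > 0` and `δ > 0`, `(c/δ²)(δ + c log(c/(c+δ))) < 1/2`. -/
theorem attacker_prob_lt_half (c δ : ℝ) (hc : 0 < c) (hδ : 0 < δ) :
    (c / δ^2) * (δ + c * Real.log (c / (c + δ))) < 1 / 2 := by
  have hpos : 0 < c / δ ^ 2 := by positivity
  calc (c / δ ^ 2) * (δ + c * log (c / (c + δ)))
      < (c / δ ^ 2) * (δ ^ 2 / (2 * c + δ)) :=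
        mul_lt_mul_of_pos_left (add_mul_log_div_add_lt hc hδ) hpos
    _ = c / (2 * c + δ) := by field_simp
    _ < 1 / 2 := by rw [div_lt_div_iff₀ (by positivity) two_pos]; linarith
end

section
/- Let V > 0, δ > 0, c_a, c_d > 0, and define G_a(s) = 1 + (c_d/δ)·log(c_a V / ((c_a+δ)(V - δ s))) and G_d(s) = c_a s/(V - δ s) on [0, s̄] where s̄ = V/(c_a + δ). Then for all s ∈ [0, s̄]: (i) ∫₀ˢ (V - δ s) dG_d(y) - c_a s = 0, and (ii) ∫₀ˢ (V - δ y) dG_a(y) - c_d s = (V - δ·0)·G_a(0), i.e. the defender's expected payoff is constant in s. -/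
open Set

lemma sub_mul_pos_of_le_div_add {V a δ y : ℝ} (hV : 0 < V) (ha : 0 < a) (hδ : 0 ≤ δ)
    (hy : y ≤ V / (a + δ)) : 0 < V - δ * y := by
  have had : 0 < a + δ := by linarith
  calc 0 < a * V / (a + δ) := by positivity
    _ = V - δ * (V / (a + δ)) := by field_simp; ring
    _ ≤ V - δ * y := by gcongr

lemma hasDerivAt_div_mul_sub_mul {V δ c y : ℝ} (hδ : δ ≠ 0) (hy : V - δ * y ≠ 0) :
    HasDerivAt (fun y => c / (δ * (V - δ * y))) (c / (V - δ * y) ^ 2) y := by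
  have hden : HasDerivAt (fun y => δ * (V - δ * y)) (δ * -δ) y := by
    simpa using (((hasDerivAt_id y).const_mul δ).const_sub V).const_mul δ
  refine ((hasDerivAt_const y c).div hden (mul_ne_zero hδ hy)).congr_deriv ?_
  field_simp
  ring

lemma integral_div_sub_mul_sq {V δ c a b : ℝ} (hδ : δ ≠ 0)
    (hne : ∀ y ∈ uIcc a b, V - δ * y ≠ 0) :
    ∫ y in a..b, c / (V - δ * y) ^ 2 = c / (δ * (V - δ * b)) - c / (δ * (V - δ * a)) := by
  refine intervalIntegral.integral_eq_sub_of_hasDerivAt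
    (fun y hy => hasDerivAt_div_mul_sub_mul hδ (hne y hy)) ?_
  refine ContinuousOn.intervalIntegrable (continuousOn_const.div (by fun_prop) ?_)
  exact fun y hy => pow_ne_zero 2 (hne y hy)

lemma integral_mul_div_self {f : ℝ → ℝ} {c a b : ℝ} (hf : ∀ y ∈ uIcc a b, f y ≠ 0) :
    ∫ y in a..b, f y * (c / f y) = c * (b - a) := by
  rw [intervalIntegral.integral_congr (g := fun _ => c) fun y hy => mul_div_cancel₀ c (hf y hy),
    intervalIntegral.integral_const, smul_eq_mul, mul_comm]

/-- The Stieltjes integrals against `G_d` and against the continuous part of `G_a` are written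
with their densities `c_a V/(V - δ y)²` and `c_d/(V - δ y)`. -/
theorem war_model_indifference_general (V ca cd δ : ℝ)
    (hV : 0 < V) (hca : 0 < ca) (hδ : 0 < δ) :
    let Ga : ℝ → ℝ := fun s => 1 + (cd / δ) * Real.log (ca * V / ((ca + δ) * (V - δ * s)))
    ∀ s ∈ Icc (0:ℝ) (V / (ca + δ)),
      ((∫ y in (0:ℝ)..s, (V - δ * s) * (ca * V / (V - δ * y)^2)) - ca * s = 0) ∧
      ((V - δ * 0) * Ga 0 + (∫ y in (0:ℝ)..s, (V - δ * y) * (cd / (V - δ * y))) - cd * s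
          = (V - δ * 0) * Ga 0) := by
  intro Ga s ⟨hs0, hs⟩
  have hne : ∀ y ∈ uIcc 0 s, V - δ * y ≠ 0 := fun y hy =>
    (sub_mul_pos_of_le_div_add hV hca hδ.le ((uIcc_of_le hs0 ▸ hy).2.trans hs)).ne'
  have hs_ne : V - δ * s ≠ 0 := hne s right_mem_uIcc
  constructor
  · rw [intervalIntegral.integral_const_mul, integral_div_sub_mul_sq hδ.ne' hne,
      mul_zero, sub_zero]
    field_simp
    ring
  · rw [integral_mul_div_self hne]
    ring

/-- Indifference conditions in the offensive/defensive balance model.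
The attacker's value from winning with score `s` is `V - δ s`; the defender's
value when the attacker bid `y` is `V - δ y`; costs are linear.  The defender
plays `G_d s = c_a s/(V - δ s)` (density `c_a V/(V - δ y)²`), and the attacker
plays `G_a s = 1 + (c_d/δ) log(c_a V/((c_a+δ)(V - δ s)))` with an atom
`G_a 0` at zero and density `c_d/(V - δ y)`.  Both players are indifferent on
`[0, s̄]` with `s̄ = V/(c_a + δ)`: the attacker's payoff is `0` and the
defender's payoff is the constant `(V - δ·0) · G_a 0`. -/
theorem war_model_indifference (V ca cd δ : ℝ)
    (hV : 0 < V) (hca : 0 < ca) (hcd : 0 < cd) (hδ : 0 < δ) :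
    let Ga : ℝ → ℝ := fun s => 1 + (cd / δ) * Real.log (ca * V / ((ca + δ) * (V - δ * s)))
    ∀ s ∈ Icc (0:ℝ) (V / (ca + δ)),
      ((∫ y in (0:ℝ)..s, (V - δ * s) * (ca * V / (V - δ * y)^2)) - ca * s = 0) ∧
      ((V - δ * 0) * Ga 0 + (∫ y in (0:ℝ)..s, (V - δ * y) * (cd / (V - δ * y))) - cd * s
          = (V - δ * 0) * Ga 0) :=
  war_model_indifference_general V ca cd δ hV hca hδ
end

section
/- Let ω ∈ (0, 1/2), v(s,y) = ω(1 - (s-y)²/2), and c(s) = s - s²/2 for s ∈ [0,1]. Then g(y) = e^{-y}/ω satisfies ∫₀ˢ v(s,y) g(y) dy = c(s) for all s ∈ [0, -log(1-ω)]. -/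
open Set Real

/-- Integrating `(1 - (s - y)² / 2) e^{-y}` by parts twice gives this antiderivative; it vanishes at
`y = s` and equals `s² / 2 - s` at `y = 0`, which is where the cost `s - s² / 2` comes from. -/
theorem hasDerivAt_exp_neg_mul_regret_antideriv (s y : ℝ) :
    HasDerivAt (fun y => exp (-y) * (s ^ 2 / 2 - s + (1 - s) * y + y ^ 2 / 2))
      ((1 - (s - y) ^ 2 / 2) * exp (-y)) y := by
  have hquad : HasDerivAt (fun y : ℝ => s ^ 2 / 2 - s + (1 - s) * y + y ^ 2 / 2)
      ((1 - s) + y) y := by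
    refine ((((hasDerivAt_id y).const_mul (1 - s)).const_add (s ^ 2 / 2 - s)).add
      ((hasDerivAt_pow 2 y).div_const 2)).congr_deriv ?_
    norm_num
  exact ((hasDerivAt_neg y).exp.mul hquad).congr_deriv (by ring)

theorem integral_regret_mul_exp_neg (s : ℝ) :
    ∫ y in (0:ℝ)..s, (1 - (s - y) ^ 2 / 2) * exp (-y) = s - s ^ 2 / 2 := by
  rw [intervalIntegral.integral_eq_sub_of_hasDerivAt
    (fun y _ => hasDerivAt_exp_neg_mul_regret_antideriv s y)
    (Continuous.intervalIntegrable (by fun_prop) _ _)]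
  simp only [neg_zero, exp_zero]
  ring

/-- Closed-form exponential equilibrium density in the all-pay contest with
winner's regret: with value `v(s,y) = ω(1 - (s-y)²/2)` and cost
`c(s) = s - s²/2`, the density `g(y) = e^{-y}/ω` satisfies the indifference
condition `∫₀ˢ v(s,y) g(y) dy = c(s)` on `[0, -log(1-ω)]`. -/
theorem winners_regret_density (ω : ℝ) (hω : ω ∈ Ioo (0:ℝ) (1/2)) :
    ∀ s ∈ Icc (0:ℝ) (-Real.log (1 - ω)),
      (∫ y in (0:ℝ)..s, (ω * (1 - (s - y)^2 / 2)) * (Real.exp (-y) / ω))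
        = s - s^2 / 2 := by
  intro s _
  have hω₀ : ω ≠ 0 := hω.1.ne'
  have hcancel : (fun y => ω * (1 - (s - y) ^ 2 / 2) * (exp (-y) / ω)) =
      fun y => (1 - (s - y) ^ 2 / 2) * exp (-y) := by
    funext y
    field_simp
  rw [hcancel, integral_regret_mul_exp_neg]
end

section
/- For all ω ∈ (0,1), the quantity 1 + ((1-ω)/ω)·log(1-ω) is strictly positive and strictly increasing in ω. -/
open Set Real

/- With `t = 1 - ω` the expression is `1 - (φ t - φ 1) / (t - 1)` for `φ t = t log t`: one minus the
slope of the chord of `φ` from `1` to `t`. Since `φ` lies strictly above its tangent `t - 1` at `1`,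
that slope is below `1`, whence positivity; since `φ` is strictly convex, the slope decreases as `t`
decreases, i.e. as `ω` increases. -/

lemma one_add_div_mul_log_eq_one_sub_secant (ω : ℝ) :
    1 + ((1 - ω) / ω) * log (1 - ω) =
      1 - ((1 - ω) * log (1 - ω) - 1 * log 1) / ((1 - ω) - 1) := by
  rw [log_one, mul_zero, sub_zero, sub_sub_cancel_left, div_neg, sub_neg_eq_add, div_mul_eq_mul_div]

/-- The expected-score expression `1 + ((1-ω)/ω) log(1-ω)` is strictly positive
and strictly increasing in `ω` on `(0,1)`. -/
theorem mean_score_pos_and_mono :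
    (∀ ω ∈ Ioo (0:ℝ) 1, 0 < 1 + ((1 - ω) / ω) * Real.log (1 - ω)) ∧
    StrictMonoOn (fun ω : ℝ => 1 + ((1 - ω) / ω) * Real.log (1 - ω)) (Ioo (0:ℝ) 1) := by
  constructor
  · rintro ω ⟨h0, h1⟩
    have hφ : (1 - ω) - 1 < (1 - ω) * log (1 - ω) - 1 * log 1 := by
      simpa using self_sub_one_lt_mul_log (x := 1 - ω) (by linarith) (by linarith)
    rw [one_add_div_mul_log_eq_one_sub_secant, sub_pos]
    exact div_lt_one_of_neg (by linarith) |>.mpr hφ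
  · rintro a ⟨ha0, ha1⟩ b ⟨hb0, hb1⟩ hab
    have hchord := strictConvexOn_mul_log.secant_strict_mono (a := 1) (x := 1 - b) (y := 1 - a)
      (mem_Ici.2 zero_le_one) (mem_Ici.2 (by linarith)) (mem_Ici.2 (by linarith))
      (by linarith) (by linarith) (by linarith)
    simp only [one_add_div_mul_log_eq_one_sub_secant]
    linarith
end

section
/- Suppose two players play mixed strategies with CDFs G₁, G₂ on [0,∞) in an all-pay contest where the payoff to player i from score s against opponent score y is vᵢ(s,y)·1[s > y] - cᵢ(s), with vᵢ continuous, vᵢ(s,s) > 0 for all s, and cᵢ continuous strictly increasing. Then in any Nash equilibrium, G₁ and G₂ cannot both have an atom at the same point t ≥ 0. -/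
/-!
If both strategies had an atom at `t`, player 1 could move its atom to a score `s` slightly
above `t`. As `s ↓ t` the expected prize `∫ 1[y < s] v₁(s, y) dμ₂` converges, by dominated
convergence, to the prize at `t` plus the tie mass `v₁(t, t) μ₂{t} > 0`, while the cost only
changes by `c₁ s - c₁ t → 0`; so some `s > t` pays strictly more than `t`, and `t` is not a best
response.
-/

open Set MeasureTheory Filter Topology Function

section

variable {μ : Measure ℝ} {v : ℝ → ℝ → ℝ} {a : ℝ}

theorem aestronglyMeasurable_ite_lt (hv : Continuous (uncurry v)) (s : ℝ) :
    AEStronglyMeasurable (fun y => if y < s then v s y else 0) μ :=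
  (Measurable.ite measurableSet_Iio (hv.uncurry_left s).measurable
    measurable_const).aestronglyMeasurable

/-- The bound comes from the compact rectangle `[b₀, b₁] × [a, b₁]`: an opponent score `y < s ≤ b₁`
lies a.e. in `[a, b₁]`. -/
theorem exists_ae_bound_ite_lt (hv : Continuous (uncurry v)) (hμ : μ (Iio a) = 0)
    (b₀ b₁ : ℝ) : ∃ M, ∀ s ∈ Icc b₀ b₁, ∀ᵐ y ∂μ, ‖if y < s then v s y else 0‖ ≤ M := by
  obtain ⟨M, hM⟩ :=
    (isCompact_Icc.prod (isCompact_Icc (a := a) (b := b₁))).exists_bound_of_continuousOn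
      hv.continuousOn
  have hae : ∀ᵐ y ∂μ, a ≤ y := by
    rw [ae_iff]
    simp only [not_le]
    exact hμ
  refine ⟨max M 0, fun s hs => ?_⟩
  filter_upwards [hae] with y hay
  split_ifs with hys
  · exact (hM (s, y) ⟨hs, hay, hys.le.trans hs.2⟩).trans (le_max_left _ _)
  · simp

theorem integrable_ite_lt [IsFiniteMeasure μ] (hv : Continuous (uncurry v))
    (hμ : μ (Iio a) = 0) (s : ℝ) : Integrable (fun y => if y < s then v s y else 0) μ :=
  let ⟨M, hM⟩ := exists_ae_bound_ite_lt hv hμ s s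
  .of_bound (aestronglyMeasurable_ite_lt hv s) M (hM s ⟨le_rfl, le_rfl⟩)

theorem tendsto_integral_ite_lt_nhdsGT [IsFiniteMeasure μ] (hv : Continuous (uncurry v))
    (hμ : μ (Iio a) = 0) (t : ℝ) :
    Tendsto (fun s => ∫ y, (if y < s then v s y else 0) ∂μ) (𝓝[>] t)
      (𝓝 (∫ y, (if y ≤ t then v t y else 0) ∂μ)) := by
  obtain ⟨M, hM⟩ := exists_ae_bound_ite_lt hv hμ t (t + 1)
  refine tendsto_integral_filter_of_dominated_convergence (fun _ => M)
    (.of_forall fun s => aestronglyMeasurable_ite_lt hv s) ?_ (integrable_const M) ?_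
  · filter_upwards [Ioc_mem_nhdsGT (lt_add_one t)] with s hs
    exact hM s (Ioc_subset_Icc_self hs)
  · refine .of_forall fun y => ?_
    rcases le_or_gt y t with hyt | hty
    · have hvy : Tendsto (fun s => v s y) (𝓝[>] t) (𝓝 (v t y)) :=
        ((hv.uncurry_right y).tendsto t).mono_left nhdsWithin_le_nhds
      rw [if_pos hyt]
      refine hvy.congr' ?_
      filter_upwards [self_mem_nhdsWithin] with s (hs : t < s)
      rw [if_pos (hyt.trans_lt hs)]
    · rw [if_neg hty.not_ge]
      refine tendsto_const_nhds.congr' ?_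
      filter_upwards [Ioo_mem_nhdsGT hty] with s hs
      rw [if_neg hs.2.not_gt]

theorem integral_ite_le_eq_add [IsFiniteMeasure μ] (hv : Continuous (uncurry v))
    (hμ : μ (Iio a) = 0) (t : ℝ) :
    ∫ y, (if y ≤ t then v t y else 0) ∂μ =
      ∫ y, (if y < t then v t y else 0) ∂μ + μ.real {t} * v t t := by
  have hsplit : (fun y => if y ≤ t then v t y else 0) =
      fun y => (if y < t then v t y else 0) + ({t} : Set ℝ).indicator (fun _ => v t t) y := by
    funext y
    rcases lt_trichotomy y t with hyt | rfl | hty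
    · simp [hyt, hyt.le, hyt.ne]
    · simp
    · simp [hty.not_gt, hty.not_ge, hty.ne']
  rw [hsplit, integral_add (integrable_ite_lt hv hμ t)
    ((integrable_const _).indicator (measurableSet_singleton t)),
    integral_indicator_const _ (measurableSet_singleton t), smul_eq_mul]

theorem exists_gt_sub_lt_of_measure_singleton_pos [IsFiniteMeasure μ] {c : ℝ → ℝ} {t : ℝ}
    (hv : Continuous (uncurry v)) (hc : ContinuousWithinAt c (Ioi t) t)
    (hμ : μ (Iio a) = 0) (hvt : 0 < v t t) (hatom : 0 < μ {t}) :
    ∃ s > t, (∫ y, (if y < t then v t y else 0) ∂μ) - c t <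
      (∫ y, (if y < s then v s y else 0) ∂μ) - c s := by
  have hlim := (tendsto_integral_ite_lt_nhdsGT hv hμ t).sub hc
  rw [integral_ite_le_eq_add hv hμ t] at hlim
  have hjump : 0 < μ.real {t} * v t t :=
    mul_pos (ENNReal.toReal_pos hatom.ne' (measure_ne_top μ _)) hvt
  have hlt : (∫ y, (if y < t then v t y else 0) ∂μ) - c t <
      (∫ y, (if y < t then v t y else 0) ∂μ) + μ.real {t} * v t t - c t := by linarith
  obtain ⟨s, hgain, hts⟩ :=
    ((hlim.eventually (lt_mem_nhds hlt)).and self_mem_nhdsWithin).exists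
  exact ⟨s, hts, hgain⟩

end

theorem no_common_atom_general
    (v₁ : ℝ → ℝ → ℝ) (c₁ : ℝ → ℝ)
    (hv₁ : Continuous (fun p : ℝ × ℝ => v₁ p.1 p.2))
    (hv₁d : ∀ s : ℝ, 0 ≤ s → 0 < v₁ s s)
    (hc₁ : Continuous c₁)
    (μ₁ μ₂ : Measure ℝ) [IsProbabilityMeasure μ₂]
    (hμ₂supp : μ₂ (Iio 0) = 0)
    (U₁ : ℝ → ℝ)
    (hU₁ : ∀ s : ℝ, U₁ s = (∫ y, (if y < s then v₁ s y else 0) ∂μ₂) - c₁ s)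
    (hbr₁ : ∀ s : ℝ, 0 < μ₁ {s} → ∀ t : ℝ, 0 ≤ t → U₁ t ≤ U₁ s)
    (t : ℝ) (ht : 0 ≤ t) :
    ¬(0 < μ₁ {t} ∧ 0 < μ₂ {t}) := by
  rintro ⟨hatom₁, hatom₂⟩
  obtain ⟨s, hts, hgain⟩ := exists_gt_sub_lt_of_measure_singleton_pos hv₁
    hc₁.continuousWithinAt hμ₂supp (hv₁d t ht) hatom₂
  have hbest := hbr₁ t hatom₁ s (ht.trans hts.le)
  rw [hU₁, hU₁] at hbest
  linarith

/-- In a two-player all-pay contest with payoff `vᵢ(s,y)·1[s>y] - cᵢ(s)`,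
`vᵢ` continuous and positive on the diagonal and `cᵢ` continuous strictly
increasing, the two equilibrium mixed strategies cannot both place an atom at
the same point `t ≥ 0`.  Equilibrium is encoded by the Nash requirement that
every point in the support of a player's strategy (in particular every atom)
is a best response among scores in `[0,∞)`. -/
theorem no_common_atom
    (v₁ v₂ : ℝ → ℝ → ℝ) (c₁ c₂ : ℝ → ℝ)
    (hv₁ : Continuous (fun p : ℝ × ℝ => v₁ p.1 p.2))
    (hv₂ : Continuous (fun p : ℝ × ℝ => v₂ p.1 p.2))
    (hv₁d : ∀ s : ℝ, 0 ≤ s → 0 < v₁ s s) (hv₂d : ∀ s : ℝ, 0 ≤ s → 0 < v₂ s s)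
    (hc₁ : Continuous c₁) (hc₂ : Continuous c₂)
    (hc₁m : StrictMono c₁) (hc₂m : StrictMono c₂)
    (μ₁ μ₂ : Measure ℝ) [IsProbabilityMeasure μ₁] [IsProbabilityMeasure μ₂]
    (hμ₁supp : μ₁ (Iio 0) = 0) (hμ₂supp : μ₂ (Iio 0) = 0)
    (hint₁ : ∀ s : ℝ, Integrable (fun y => v₁ s y) μ₂)
    (hint₂ : ∀ s : ℝ, Integrable (fun y => v₂ s y) μ₁)
    (U₁ U₂ : ℝ → ℝ)
    (hU₁ : ∀ s : ℝ, U₁ s = (∫ y, (if y < s then v₁ s y else 0) ∂μ₂) - c₁ s)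
    (hU₂ : ∀ s : ℝ, U₂ s = (∫ y, (if y < s then v₂ s y else 0) ∂μ₁) - c₂ s)
    (hbr₁ : ∀ s : ℝ, 0 < μ₁ {s} → ∀ t : ℝ, 0 ≤ t → U₁ t ≤ U₁ s)
    (hbr₂ : ∀ s : ℝ, 0 < μ₂ {s} → ∀ t : ℝ, 0 ≤ t → U₂ t ≤ U₂ s)
    (t : ℝ) (ht : 0 ≤ t) :
    ¬(0 < μ₁ {t} ∧ 0 < μ₂ {t}) :=
  no_common_atom_general v₁ c₁ hv₁ hv₁d hc₁ μ₁ μ₂ hμ₂supp U₁ hU₁ hbr₁ t ht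
end
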